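/- arXiv:1807.07797 — 3 statements merged into one kernel-verified Lean document; each statement's English description precedes it below -/
import Mathlib

section
/- Let x_t = A cos(2π t f / n + φ) for t ∈ ℤ, with A, φ real and f a real number such that neither (k−f)/n nor (k+f)/n is an integer for the given integer k with 0 ≤ k ≤ n−1. Let a_{k,p} = (1/√n) Σ_{j=0}^{n−1} x_{p−n+1+j} ω_n^{−jk} with ω_n = e^{2πi/n} and p̂ = p−n+1. Then a_{k,p} = (A/(2√n)) [ e^{iφ} ω_n^{f p̂} e^{−iπ(n−1)(k−f)/n} · sin(π(k−f)) / sin(π(k−f)/n) + e^{−iφ} ω_n^{−f p̂} e^{−iπ(n−1)(k+f)/n} · sin(π(k+f)) / sin(π(k+f)/n) ]. -/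
/-!
Write the cosine as the average of the two complex tones `e^{±i(2πtf/n + φ)}`. Against the
`k`-th DFT vector each tone leaves a geometric sum with ratio `e^{-2πi(k ∓ f)/n}`, which differs
from `1` precisely because `(k ∓ f)/n` is not an integer; the half-angle factorisation
`e^{iθ} - 1 = 2i e^{iθ/2} sin(θ/2)` turns that sum into a phase times the Dirichlet kernel.
-/

open Complex Finset
open scoped Real

theorem Complex.exp_mul_I_sub_one (θ : ℝ) :
    exp (θ * I) - 1 = exp (θ / 2 * I) * (2 * I * (Real.sin (θ / 2) : ℂ)) := by
  have h_sq : exp (θ / 2 * I) * exp (θ / 2 * I) = exp (θ * I) := by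
    rw [← exp_add]; ring_nf
  have h_inv : exp (θ / 2 * I) * exp (-(θ / 2) * I) = 1 := by
    rw [← exp_add]; simp
  rw [ofReal_sin, ofReal_div, ofReal_ofNat, sin]
  linear_combination I ^ 2 * h_sq - I ^ 2 * h_inv + (exp (θ * I) - 1) * I_sq

theorem Complex.sum_range_exp_mul_I (n : ℕ) (θ : ℝ) (hθ : Real.sin (θ / 2) ≠ 0) :
    ∑ j ∈ range n, exp (j * θ * I) =
      exp ((n - 1) * θ / 2 * I) * ((Real.sin (n * θ / 2) / Real.sin (θ / 2) : ℝ) : ℂ) := by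
  have h_ne_one : exp (θ * I) - 1 ≠ 0 := by
    rw [exp_mul_I_sub_one]
    exact mul_ne_zero (exp_ne_zero _)
      (mul_ne_zero (mul_ne_zero two_ne_zero I_ne_zero) (ofReal_ne_zero.mpr hθ))
  have h_pow (m : ℕ) : exp (m * θ * I) = exp (θ * I) ^ m := by
    rw [← exp_nat_mul, mul_assoc]
  have h_split : exp ((n * θ : ℝ) / 2 * I) = exp ((n - 1) * θ / 2 * I) * exp (θ / 2 * I) := by
    rw [← exp_add]; push_cast; ring_nf
  simp only [h_pow]
  rw [geom_sum_eq (sub_ne_zero.mp h_ne_one), ← h_pow, ← ofReal_natCast, ← ofReal_mul,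
    exp_mul_I_sub_one, exp_mul_I_sub_one, h_split]
  rw [exp_mul_I_sub_one] at h_ne_one
  field_simp
  push_cast
  ring_nf

theorem Real.sin_pi_mul_ne_zero {x : ℝ} (hx : ¬∃ m : ℤ, x = m) : Real.sin (π * x) ≠ 0 := by
  rw [Real.sin_ne_zero_iff]
  rintro m hm
  exact hx ⟨m, mul_left_cancel₀ Real.pi_ne_zero (by linarith)⟩

theorem sum_range_exp_tone_mul_exp (n : ℕ) (f k : ℝ) (q : ℂ)
    (h : ¬∃ m : ℤ, (k - f) / n = m) :
    ∑ j ∈ range n, exp (2 * π * I * f * (q + j) / n) * exp (-(2 * π * I * j * k) / n) =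
      exp (2 * π * I * f * q / n) * exp (-π * I * (n - 1) * (k - f) / n) *
        ((Real.sin (π * (k - f)) / Real.sin (π * (k - f) / n) : ℝ) : ℂ) := by
  have hn : (n : ℝ) ≠ 0 := by
    -- with Lean's `x / 0 = 0`, the case `n = 0` violates `h`
    rintro hn
    exact h ⟨0, by simp [hn]⟩
  set θ : ℝ := -(2 * π * (k - f) / n) with hθ_def
  have hθ : Real.sin (θ / 2) ≠ 0 := by
    rw [show θ / 2 = -(π * ((k - f) / n)) by ring, Real.sin_neg, neg_ne_zero]
    exact Real.sin_pi_mul_ne_zero h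
  have h_term (j : ℕ) : exp (2 * π * I * f * (q + j) / n) * exp (-(2 * π * I * j * k) / n) =
      exp (2 * π * I * f * q / n) * exp (j * θ * I) := by
    rw [← exp_add, ← exp_add, hθ_def]; congr 1; push_cast; field_simp; ring
  rw [sum_congr rfl fun j _ => h_term j, ← mul_sum, Complex.sum_range_exp_mul_I n θ hθ, ← mul_assoc]
  congr 2
  · rw [hθ_def]; congr 1; push_cast; field_simp
  · rw [show n * θ / 2 = -(π * (k - f)) by rw [hθ_def]; field_simp,
      show θ / 2 = -(π * (k - f) / n) by ring, Real.sin_neg, Real.sin_neg, neg_div_neg_eq]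

theorem swdft_global_signal_dirichlet_general
    (n : ℕ) (A φ f : ℝ) (k : ℕ)
    (h1 : ¬ ∃ m : ℤ, ((k : ℝ) - f) / (n : ℝ) = (m : ℝ))
    (h2 : ¬ ∃ m : ℤ, ((k : ℝ) + f) / (n : ℝ) = (m : ℝ))
    (x : ℤ → ℝ)
    (hx : ∀ t : ℤ, x t = A * Real.cos (2 * Real.pi * (t : ℝ) * f / (n : ℝ) + φ))
    (p : ℤ) :
    (1 / Real.sqrt n : ℂ) *
        ∑ j ∈ Finset.range n, (x (p - n + 1 + j) : ℂ) *
          Complex.exp (-(2 * (Real.pi : ℂ) * Complex.I * (j : ℂ) * (k : ℂ)) / (n : ℂ)) =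
      ((A / (2 * Real.sqrt n) : ℝ) : ℂ) *
        (Complex.exp (Complex.I * (φ : ℂ)) *
            Complex.exp (2 * (Real.pi : ℂ) * Complex.I * (f : ℂ) * ((p : ℂ) - (n : ℂ) + 1) / (n : ℂ)) *
            Complex.exp (-(Real.pi : ℂ) * Complex.I * ((n : ℂ) - 1) * ((k : ℂ) - (f : ℂ)) / (n : ℂ)) *
            ((Real.sin (Real.pi * ((k : ℝ) - f)) / Real.sin (Real.pi * ((k : ℝ) - f) / (n : ℝ)) : ℝ) : ℂ) +
          Complex.exp (-Complex.I * (φ : ℂ)) *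
            Complex.exp (-(2 * (Real.pi : ℂ) * Complex.I * (f : ℂ) * ((p : ℂ) - (n : ℂ) + 1)) / (n : ℂ)) *
            Complex.exp (-(Real.pi : ℂ) * Complex.I * ((n : ℂ) - 1) * ((k : ℂ) + (f : ℂ)) / (n : ℂ)) *
            ((Real.sin (Real.pi * ((k : ℝ) + f)) / Real.sin (Real.pi * ((k : ℝ) + f) / (n : ℝ)) : ℝ) : ℂ)) := by
  set q : ℂ := (p : ℂ) - n + 1
  have h_term (j : ℕ) : (x (p - n + 1 + j) : ℂ) * exp (-(2 * π * I * j * k) / n) =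
      A / 2 * (exp (I * φ) * (exp (2 * π * I * f * (q + j) / n) *
          exp (-(2 * π * I * j * (k : ℝ)) / n)) +
        exp (-I * φ) * (exp (2 * π * I * (-f : ℝ) * (q + j) / n) *
          exp (-(2 * π * I * j * (k : ℝ)) / n))) := by
    have h_pos : exp (((2 * π * ((p - n + 1 + j : ℤ) : ℝ) * f / n + φ : ℝ) : ℂ) * I) =
        exp (I * φ) * exp (2 * π * I * f * (q + j) / n) := by
      rw [← exp_add]; congr 1; push_cast; ring
    have h_neg : exp (-((2 * π * ((p - n + 1 + j : ℤ) : ℝ) * f / n + φ : ℝ) : ℂ) * I) =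
        exp (-I * φ) * exp (2 * π * I * (-f : ℝ) * (q + j) / n) := by
      rw [← exp_add]; congr 1; push_cast; ring
    rw [hx, ofReal_mul, ofReal_cos, cos, h_pos, h_neg, ofReal_natCast]
    ring
  have h2' : ¬∃ m : ℤ, ((k : ℝ) - (-f)) / n = m := by simpa only [sub_neg_eq_add] using h2
  rw [sum_congr rfl fun j _ => h_term j, ← mul_sum, sum_add_distrib, ← mul_sum, ← mul_sum,
    sum_range_exp_tone_mul_exp n f k q h1, sum_range_exp_tone_mul_exp n (-f) k q h2']
  push_cast
  ring_nf

/-- SWDFT of a global periodic signal expressed via Dirichlet kernels, in the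
leakage case where neither `(k−f)/n` nor `(k+f)/n` is an integer. -/
theorem swdft_global_signal_dirichlet
    (n : ℕ) (hn : 1 ≤ n) (A φ f : ℝ) (k : ℕ) (hk : k ≤ n - 1)
    (h1 : ¬ ∃ m : ℤ, ((k : ℝ) - f) / (n : ℝ) = (m : ℝ))
    (h2 : ¬ ∃ m : ℤ, ((k : ℝ) + f) / (n : ℝ) = (m : ℝ))
    (x : ℤ → ℝ)
    (hx : ∀ t : ℤ, x t = A * Real.cos (2 * Real.pi * (t : ℝ) * f / (n : ℝ) + φ))
    (p : ℤ) :
    (1 / Real.sqrt n : ℂ) *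
        ∑ j ∈ Finset.range n, (x (p - n + 1 + j) : ℂ) *
          Complex.exp (-(2 * (Real.pi : ℂ) * Complex.I * (j : ℂ) * (k : ℂ)) / (n : ℂ)) =
      ((A / (2 * Real.sqrt n) : ℝ) : ℂ) *
        (Complex.exp (Complex.I * (φ : ℂ)) *
            Complex.exp (2 * (Real.pi : ℂ) * Complex.I * (f : ℂ) * ((p : ℂ) - (n : ℂ) + 1) / (n : ℂ)) *
            Complex.exp (-(Real.pi : ℂ) * Complex.I * ((n : ℂ) - 1) * ((k : ℂ) - (f : ℂ)) / (n : ℂ)) *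
            ((Real.sin (Real.pi * ((k : ℝ) - f)) / Real.sin (Real.pi * ((k : ℝ) - f) / (n : ℝ)) : ℝ) : ℂ) +
          Complex.exp (-Complex.I * (φ : ℂ)) *
            Complex.exp (-(2 * (Real.pi : ℂ) * Complex.I * (f : ℂ) * ((p : ℂ) - (n : ℂ) + 1)) / (n : ℂ)) *
            Complex.exp (-(Real.pi : ℂ) * Complex.I * ((n : ℂ) - 1) * ((k : ℂ) + (f : ℂ)) / (n : ℂ)) *
            ((Real.sin (Real.pi * ((k : ℝ) + f)) / Real.sin (Real.pi * ((k : ℝ) + f) / (n : ℝ)) : ℝ) : ℂ)) :=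
  swdft_global_signal_dirichlet_general n A φ f k h1 h2 x hx p
end

section
/- Let n be an even positive integer and let x_t = A cos(π t + φ) for t ∈ ℤ, with A, φ real (i.e., the signal at the Nyquist frequency f = n/2). Then for every window position p, with p̂ = p − n + 1, the SWDFT coefficient at frequency index n/2 is real and equals a_{n/2,p} = √n · A · (−1)^{p̂} · cos(φ). -/
open Complex Finset

/-
At the Nyquist index `k = n/2` the Fourier kernel `ω_n^{-jk}` is `exp (-π i j) = (-1)^j`, while the
sampled signal is `x_{p̂+j} = A (-1)^{p̂+j} cos φ`. The two signs cancel, so every summand equals the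
real constant `A (-1)^{p̂} cos φ`, and the `n` summands together with the factor `1/√n` give `√n`.
-/

lemma Real.cos_pi_mul_int_add (t : ℤ) (φ : ℝ) :
    Real.cos (Real.pi * t + φ) = (-1 : ℝ) ^ t * Real.cos φ := by
  rw [add_comm, mul_comm, Real.cos_add_int_mul_pi]

lemma Complex.exp_nyquist_kernel {n : ℂ} (hn : n ≠ 0) (j : ℕ) :
    exp (-(2 * (Real.pi : ℂ) * I * j * (n / 2)) / n) = ((-1 : ℝ) ^ j : ℝ) := by
  have harg : -(2 * (Real.pi : ℂ) * I * j * (n / 2)) / n = j * -(Real.pi * I) := by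
    field_simp
  rw [harg, exp_nat_mul, exp_neg, exp_pi_mul_I]
  push_cast
  ring

lemma neg_one_zpow_add_mul_pow_self (a : ℤ) (j : ℕ) :
    (-1 : ℝ) ^ (a + j) * (-1 : ℝ) ^ j = (-1 : ℝ) ^ a := by
  rw [zpow_add₀ (by norm_num), zpow_natCast, mul_assoc, ← pow_add,
    Even.neg_one_pow ⟨j, rfl⟩, mul_one]

lemma Complex.one_div_sqrt_mul_natCast (n : ℕ) :
    (1 / Real.sqrt n : ℂ) * n = (Real.sqrt n : ℝ) := by
  rw [one_div_mul_eq_div, ← ofReal_natCast, ← ofReal_div, Real.div_sqrt]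

theorem swdft_nyquist_general
    (n : ℕ)
    (A φ : ℝ)
    (x : ℤ → ℝ)
    (hx : ∀ t : ℤ, x t = A * Real.cos (Real.pi * (t : ℝ) + φ))
    (p : ℤ) :
    (1 / Real.sqrt n : ℂ) *
        ∑ j ∈ Finset.range n, (x (p - n + 1 + j) : ℂ) *
          Complex.exp (-(2 * (Real.pi : ℂ) * Complex.I * (j : ℂ) * ((n : ℂ) / 2)) / (n : ℂ)) =
      ((Real.sqrt n * A * (-1 : ℝ) ^ (p - (n : ℤ) + 1) * Real.cos φ : ℝ) : ℂ) := by
  have hterm : ∀ j ∈ range n, (x (p - n + 1 + j) : ℂ) *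
      exp (-(2 * (Real.pi : ℂ) * I * j * ((n : ℂ) / 2)) / n) =
        ((A * (-1 : ℝ) ^ (p - (n : ℤ) + 1) * Real.cos φ : ℝ) : ℂ) := by
    intro j hj
    have hn : (n : ℂ) ≠ 0 := Nat.cast_ne_zero.mpr (nonempty_range_iff.mp ⟨j, hj⟩)
    rw [exp_nyquist_kernel hn, ← ofReal_mul, hx, Real.cos_pi_mul_int_add]
    congr 1
    linear_combination A * Real.cos φ * neg_one_zpow_add_mul_pow_self (p - n + 1) j
  rw [sum_congr rfl hterm, sum_const, card_range, nsmul_eq_mul, ← mul_assoc,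
    one_div_sqrt_mul_natCast, ← ofReal_mul]
  congr 1
  ring

/-- At the Nyquist frequency `k = n/2` (with `n` even), the SWDFT coefficient of
`x_t = A cos(π t + φ)` is real and equals `√n · A · (−1)^{p̂} · cos φ`. -/
theorem swdft_nyquist
    (n : ℕ) (hn : 1 ≤ n) (heven : Even n)
    (A φ : ℝ)
    (x : ℤ → ℝ)
    (hx : ∀ t : ℤ, x t = A * Real.cos (Real.pi * (t : ℝ) + φ))
    (p : ℤ) :
    (1 / Real.sqrt n : ℂ) *
        ∑ j ∈ Finset.range n, (x (p - n + 1 + j) : ℂ) *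
          Complex.exp (-(2 * (Real.pi : ℂ) * Complex.I * (j : ℂ) * ((n : ℂ) / 2)) / (n : ℂ)) =
      ((Real.sqrt n * A * (-1 : ℝ) ^ (p - (n : ℤ) + 1) * Real.cos φ : ℝ) : ℂ) :=
  swdft_nyquist_general n A φ x hx p
end

section
/- Let s_t be the step function equal to 1 for t ≥ d and 0 for t < d, where d is an integer. Fix a window size n ≥ 1 and suppose the window position p satisfies d ≤ p ≤ d + n − 1 (the window covers the step). Then a_{0,p} = (p − d + 1)/√n, and for every k with 1 ≤ k ≤ n−1, a_{k,p} = (ω_n^{−k(d − p + n − 1)} / √n) · (1 − ω_n^{−k(p − d + 1)}) / (1 − ω_n^{−k}). In particular all n coefficients are nonzero quantities given by these formulas even though the input has no periodic component (ringing). -/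
/-! The step zeroes the first `d - p + n - 1` samples of the window and leaves the rest equal
to `1`, so `√n · a_k` is a partial geometric sum of `ω^{-k}` over the tail of the window. At
`k = 0` it counts the `p - d + 1` surviving samples; for `0 < k < n`, `ω^{-k} ≠ 1` because `ω` is
a primitive `n`-th root of unity, and the sum has the closed form of the theorem. -/

open Complex Finset

lemma sum_range_ite_le_eq_sum_Ico {M : Type*} [AddCommMonoid M] (m n : ℕ) (f : ℕ → M) :
    ∑ j ∈ range n, (if m ≤ j then f j else 0) = ∑ j ∈ Ico m n, f j := by
  rw [← sum_filter, range_eq_Ico, Ico_filter_le, Nat.zero_max]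

lemma geom_sum_Ico_eq_pow_mul {K : Type*} [Field K] {x : K} (hx : x ≠ 1) {m n : ℕ} (hmn : m ≤ n) :
    ∑ i ∈ Ico m n, x ^ i = x ^ m * ((1 - x ^ (n - m)) / (1 - x)) := by
  rw [geom_sum_Ico' hx hmn, mul_div_assoc', mul_sub, mul_one, ← pow_add, Nat.add_sub_cancel' hmn]

lemma exp_neg_two_pi_I_mul_div (n j k : ℕ) :
    exp (-(2 * (Real.pi : ℂ) * I * j * k) / n) = (exp (2 * Real.pi * I / n) ^ (-(k : ℤ))) ^ j := by
  rw [← zpow_natCast, ← zpow_mul, ← exp_int_mul]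
  congr 1
  push_cast
  ring

theorem swdft_step_during_jump_general
    (n : ℕ) (d : ℤ)
    (s : ℤ → ℝ) (hs : ∀ t : ℤ, s t = if d ≤ t then 1 else 0)
    (p : ℤ) (hp1 : d ≤ p) (hp2 : p ≤ d + (n : ℤ) - 1)
    (ω : ℂ) (hω : ω = Complex.exp (2 * (Real.pi : ℂ) * Complex.I / (n : ℂ)))
    (a : ℕ → ℂ)
    (ha : ∀ k, a k = (1 / Real.sqrt n : ℂ) *
      ∑ j ∈ Finset.range n, (s (p - n + 1 + j) : ℂ) *
        Complex.exp (-(2 * (Real.pi : ℂ) * Complex.I * (j : ℂ) * (k : ℂ)) / (n : ℂ))) :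
    a 0 = (((p : ℂ) - (d : ℂ) + 1) / (Real.sqrt n : ℂ)) ∧
      ∀ k : ℕ, 1 ≤ k → k ≤ n - 1 →
        a k = (ω ^ (-(k : ℤ) * (d - p + (n : ℤ) - 1)) / (Real.sqrt n : ℂ)) *
          ((1 - ω ^ (-(k : ℤ) * (p - d + 1))) / (1 - ω ^ (-(k : ℤ)))) := by
  obtain ⟨m, hm⟩ : ∃ m : ℕ, (m : ℤ) = d - p + n - 1 := ⟨_, Int.toNat_of_nonneg (by omega)⟩
  have hmn : m ≤ n := by omega
  have hnm : ((n - m : ℕ) : ℤ) = p - d + 1 := by omega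
  have hwindow : ∀ k : ℕ, a k = (1 / Real.sqrt n : ℂ) * ∑ j ∈ Ico m n, (ω ^ (-(k : ℤ))) ^ j := by
    intro k
    rw [ha, ← sum_range_ite_le_eq_sum_Ico, hω]
    refine congrArg _ (sum_congr rfl fun j _ => ?_)
    rw [hs, exp_neg_two_pi_I_mul_div]
    split_ifs <;> first | omega | simp
  constructor
  · rw [hwindow, Nat.cast_zero, neg_zero, zpow_zero]
    simp only [one_pow, sum_const, Nat.card_Ico, nsmul_eq_mul, mul_one]
    rw [show ((n - m : ℕ) : ℂ) = p - d + 1 by exact_mod_cast hnm]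
    ring
  · intro k hk1 hk2
    have hprim : IsPrimitiveRoot ω n := hω ▸ isPrimitiveRoot_exp n (by omega)
    have hz : ω ^ (-(k : ℤ)) ≠ 1 := by
      simpa [zpow_neg] using hprim.pow_ne_one_of_pos_of_lt (by omega) (by omega)
    rw [hwindow, geom_sum_Ico_eq_pow_mul hz hmn, ← zpow_natCast, ← zpow_natCast, ← zpow_mul,
      ← zpow_mul, hm, hnm]
    ring

/-- Step function, window covering the jump (`d ≤ p ≤ d + n − 1`): ringing.
The SWDFT coefficients are `(p − d + 1)/√n` at frequency `0`, and
`ω_n^{−k(d−p+n−1)}/√n · (1 − ω_n^{−k(p−d+1)})/(1 − ω_n^{−k})` at `1 ≤ k ≤ n−1`. -/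
theorem swdft_step_during_jump
    (n : ℕ) (hn : 1 ≤ n) (d : ℤ)
    (s : ℤ → ℝ) (hs : ∀ t : ℤ, s t = if d ≤ t then 1 else 0)
    (p : ℤ) (hp1 : d ≤ p) (hp2 : p ≤ d + (n : ℤ) - 1)
    (ω : ℂ) (hω : ω = Complex.exp (2 * (Real.pi : ℂ) * Complex.I / (n : ℂ)))
    (a : ℕ → ℂ)
    (ha : ∀ k, a k = (1 / Real.sqrt n : ℂ) *
      ∑ j ∈ Finset.range n, (s (p - n + 1 + j) : ℂ) *
        Complex.exp (-(2 * (Real.pi : ℂ) * Complex.I * (j : ℂ) * (k : ℂ)) / (n : ℂ))) :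
    a 0 = (((p : ℂ) - (d : ℂ) + 1) / (Real.sqrt n : ℂ)) ∧
      ∀ k : ℕ, 1 ≤ k → k ≤ n - 1 →
        a k = (ω ^ (-(k : ℤ) * (d - p + (n : ℤ) - 1)) / (Real.sqrt n : ℂ)) *
          ((1 - ω ^ (-(k : ℤ) * (p - d + 1))) / (1 - ω ^ (-(k : ℤ)))) :=
  swdft_step_during_jump_general n d s hs p hp1 hp2 ω hω a ha
end
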